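/- With notation as in the previous statement, modulo p one has the congruence n·e_n ≡ Σ_{i=1}^d Σ_{r=0}^∞ i · e_{n-ip^r} · a_i^{p^r} · (Σ_{j=1}^ℓ c_j π_j)^{p^r} (mod p), i.e., in F_q[[π_1,...,π_ℓ]] the recurrence involves only powers of the single element T̄ = Σ_j c̄_j π_j. -/

import Mathlib

/-- The factor `E(c · π_j · x^i)` of `∏_j E_{c_j f}(x)_{π_j}`, as a power series in `x` over
`R[[π_1, …, π_ℓ]]`; `u : ℕ → R` is the coefficient sequence of the Artin–Hasse exponential. -/
noncomputable def mvAhFactor {R : Type*} [CommRing R] (ℓ : ℕ) (u : ℕ → R) (c : R)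
    (i : ℕ) (j : Fin ℓ) : PowerSeries (MvPowerSeries (Fin ℓ) R) :=
  PowerSeries.mk fun n =>
    if i = 0 then
      (if n = 0 then
        (fun s => if s = Finsupp.single j (s j) then u (s j) * c ^ (s j) else 0 :
          MvPowerSeries (Fin ℓ) R)
      else 0)
    else if i ∣ n then
      (MvPowerSeries.monomial (R := R) (Finsupp.single j (n / i))) (u (n / i) * c ^ (n / i))
    else 0

/-- The coefficient `e_n` of `x^n` in `∏_{j=1}^ℓ E_{c_j f}(x)_{π_j}`, extended to integer
indices by the convention `e_m = 0` for `m < 0`. -/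
noncomputable def mvAhCoeff {R : Type*} [CommRing R] (ℓ d : ℕ) (u : ℕ → R) (a : ℕ → R)
    (c : Fin ℓ → R) (n : ℤ) : MvPowerSeries (Fin ℓ) R :=
  if n < 0 then 0
  else PowerSeries.coeff (R := MvPowerSeries (Fin ℓ) R) n.toNat
    (∏ j : Fin ℓ, ∏ i ∈ Finset.range (d + 1), mvAhFactor ℓ u (c j * a i) i j)

/-!
With `θ = X d/dX`, the recurrence satisfied by the Artin–Hasse coefficients `u` says exactly that
`θ E = (∑_r X^{p^r}) E` for `E = ∑ u_k X^k`. Hence each factor `E(c π_j X^i)` has logarithmic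
Euler derivative `∑_r i (c π_j)^{p^r} X^{i p^r}`, and applying `θ` to the product and comparing
coefficients of `X^n` gives the exact identity
`n e_n = ∑_{i,r} i e_{n - i p^r} a_i^{p^r} ∑_j (c_j π_j)^{p^r}`.
The congruence follows from `∑_j (c_j π_j)^{p^r} ≡ (∑_j c_j π_j)^{p^r} mod p`.
-/

theorem Derivation.map_prod_eq_sum_mul_prod {R B : Type*} [CommSemiring R] [CommSemiring B]
    [Algebra R B] (D : Derivation R B B) {ι : Type*} (s : Finset ι) (f g : ι → B)
    (h : ∀ k ∈ s, D (f k) = g k * f k) :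
    D (∏ k ∈ s, f k) = (∑ k ∈ s, g k) * ∏ k ∈ s, f k := by
  classical
  induction s using Finset.induction_on with
  | empty => simp
  | insert b t hb ih =>
    rw [Finset.prod_insert hb, Finset.sum_insert hb, D.leibniz, smul_eq_mul, smul_eq_mul,
      ih fun k hk => h k (Finset.mem_insert_of_mem hk), h b (Finset.mem_insert_self b t)]
    ring

theorem Finset.prime_dvd_sum_pow_sub_pow_sum {A : Type*} [CommRing A] {p : ℕ} (hp : p.Prime)
    {ι : Type*} (s : Finset ι) (x : ι → A) (k : ℕ) :
    (p : A) ∣ ∑ j ∈ s, x j ^ p ^ k - (∑ j ∈ s, x j) ^ p ^ k := by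
  classical
  induction s using Finset.induction_on with
  | empty => simp [zero_pow (pow_pos hp.pos k).ne']
  | insert b t hb ih =>
    obtain ⟨w, hw⟩ := exists_add_pow_prime_pow_eq hp (x b) (∑ j ∈ t, x j) k
    rw [Finset.sum_insert hb, Finset.sum_insert hb, hw]
    convert ih.sub (dvd_mul_right (p : A) (x b * (∑ j ∈ t, x j) * w)) using 1
    ring

def ArtinHasseRecurrence {A : Type*} [Semiring A] (p : ℕ) (u : ℕ → A) : Prop :=
  ∀ k : ℕ, 1 ≤ k → k • u k = ∑ r ∈ Finset.range (k + 1), if p ^ r ≤ k then u (k - p ^ r) else 0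

theorem ArtinHasseRecurrence.map {A B : Type*} [Semiring A] [Semiring B] {p : ℕ} {u : ℕ → A}
    (hu : ArtinHasseRecurrence p u) (f : A →+* B) : ArtinHasseRecurrence p (f ∘ u) := by
  intro k hk
  simp only [Function.comp_apply, ← map_nsmul, hu k hk, map_sum, apply_ite f, map_zero]

namespace PowerSeries

section CommSemiring

variable {A : Type*} [CommSemiring A]

noncomputable def eulerDeriv : Derivation A A⟦X⟧ A⟦X⟧ := (X : A⟦X⟧) • d⁄dX A

theorem coeff_eulerDeriv (f : A⟦X⟧) (m : ℕ) : coeff m (eulerDeriv f) = m • coeff m f := by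
  rcases m with _ | m
  · simp [eulerDeriv]
  · simp [eulerDeriv, coeff_succ_X_mul, coeff_derivative, nsmul_eq_mul, mul_comm]

theorem eulerDeriv_rescale (y : A) (f : A⟦X⟧) :
    eulerDeriv (rescale y f) = rescale y (eulerDeriv f) := by
  ext m
  simp only [coeff_eulerDeriv, coeff_rescale, mul_smul_comm]

/-- `∑_{r ≥ 0} i y^{p^r} X^{i p^r}`, which is `X d/dX log E(y X^i)` for the Artin–Hasse
exponential `E(t) = exp (∑_r t^{p^r} / p^r)`. -/
noncomputable def ahLogDeriv (p i : ℕ) (y : A) : A⟦X⟧ :=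
  mk fun m => ∑ r ∈ Finset.range (m + 1), if m = i * p ^ r then (i : A) * y ^ p ^ r else 0

theorem ahLogDeriv_zero_left (p : ℕ) (y : A) : ahLogDeriv p 0 y = 0 := by
  ext m
  simp [ahLogDeriv]

theorem coeff_ahLogDeriv_of_le {p : ℕ} (hp : 1 < p) (i : ℕ) (y : A) {m N : ℕ} (hm : m ≤ N) :
    coeff m (ahLogDeriv p i y) =
      ∑ r ∈ Finset.range (N + 1), if m = i * p ^ r then (i : A) * y ^ p ^ r else 0 := by
  rw [ahLogDeriv, coeff_mk]
  refine Finset.sum_subset (Finset.range_subset_range.mpr (by omega)) fun r _ hr => ?_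
  rw [Finset.mem_range] at hr
  rcases Nat.eq_zero_or_pos i with rfl | hi
  · simp
  · have : r < p ^ r := Nat.lt_pow_self hp
    exact if_neg fun h => by nlinarith

theorem coeff_ahLogDeriv_mul {p : ℕ} (hp : 1 < p) (i : ℕ) (y : A) (F : A⟦X⟧) (n : ℕ) :
    coeff n (ahLogDeriv p i y * F) =
      ∑ r ∈ Finset.range (n + 1),
        if i * p ^ r ≤ n then (i : A) * y ^ p ^ r * coeff (n - i * p ^ r) F else 0 := by
  rw [coeff_mul, Finset.Nat.sum_antidiagonal_eq_sum_range_succ_mk]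
  calc ∑ m ∈ Finset.range (n + 1), coeff m (ahLogDeriv p i y) * coeff (n - m) F
      = ∑ m ∈ Finset.range (n + 1), ∑ r ∈ Finset.range (n + 1),
          if m = i * p ^ r then (i : A) * y ^ p ^ r * coeff (n - m) F else 0 := by
        refine Finset.sum_congr rfl fun m hm => ?_
        rw [coeff_ahLogDeriv_of_le hp i y (Nat.lt_succ_iff.mp (Finset.mem_range.mp hm)),
          Finset.sum_mul]
        simp only [ite_mul, zero_mul]
    _ = _ := by
        rw [Finset.sum_comm]
        refine Finset.sum_congr rfl fun r _ => ?_
        simp only [Finset.sum_ite_eq', Finset.mem_range, Nat.lt_succ_iff]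

theorem eulerDeriv_mk_of_artinHasseRecurrence {p : ℕ} (hp : 1 < p) {u : ℕ → A}
    (hu : ArtinHasseRecurrence p u) : eulerDeriv (mk u) = ahLogDeriv p 1 1 * mk u := by
  ext k
  rw [coeff_eulerDeriv, coeff_ahLogDeriv_mul hp]
  rcases Nat.eq_zero_or_pos k with rfl | hk
  · simp
  · simp [hu k hk]

end CommSemiring

section CommRing

variable {A : Type*} [CommRing A]

theorem eulerDeriv_expand (i : ℕ) (hi : i ≠ 0) (f : A⟦X⟧) :
    eulerDeriv (expand i hi f) = i • expand i hi (eulerDeriv f) := by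
  ext m
  rw [coeff_eulerDeriv, map_nsmul, coeff_expand, coeff_expand]
  split_ifs with h
  · obtain ⟨k, rfl⟩ := h
    rw [Nat.mul_div_cancel_left k (Nat.pos_of_ne_zero hi), coeff_eulerDeriv, smul_smul]
  · simp

theorem ahLogDeriv_eq_smul_expand {p : ℕ} (hp : 1 < p) {i : ℕ} (hi : i ≠ 0) (y : A) :
    ahLogDeriv p i y = i • expand i hi (rescale y (ahLogDeriv p 1 1)) := by
  ext m
  rw [map_nsmul, coeff_expand]
  split_ifs with h
  · obtain ⟨k, rfl⟩ := h
    rw [Nat.mul_div_cancel_left k (Nat.pos_of_ne_zero hi), coeff_rescale,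
      coeff_ahLogDeriv_of_le hp 1 1 (Nat.le_mul_of_pos_left k (Nat.pos_of_ne_zero hi)),
      ahLogDeriv, coeff_mk, Finset.mul_sum, Finset.smul_sum]
    refine Finset.sum_congr rfl fun r _ => ?_
    simp only [Nat.mul_left_cancel_iff (Nat.pos_of_ne_zero hi), one_mul, Nat.cast_one, one_pow]
    split_ifs with hk
    · rw [hk, mul_one, nsmul_eq_mul]
    · rw [mul_zero, smul_zero]
  · rw [smul_zero, ahLogDeriv, coeff_mk]
    exact Finset.sum_eq_zero fun r _ => if_neg fun hm => h ⟨_, hm⟩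

theorem eulerDeriv_expand_rescale_mk {p : ℕ} (hp : 1 < p) {u : ℕ → A}
    (hu : ArtinHasseRecurrence p u) {i : ℕ} (hi : i ≠ 0) (y : A) :
    eulerDeriv (expand i hi (rescale y (mk u))) =
      ahLogDeriv p i y * expand i hi (rescale y (mk u)) := by
  rw [eulerDeriv_expand, eulerDeriv_rescale, eulerDeriv_mk_of_artinHasseRecurrence hp hu,
    map_mul, map_mul, ahLogDeriv_eq_smul_expand hp hi, smul_mul_assoc]

end CommRing

end PowerSeries

open PowerSeries

section mvAhFactor

variable {R : Type*} [CommRing R] {ℓ : ℕ}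

theorem mvAhFactor_eq_expand (u : ℕ → R) (c : R) {i : ℕ} (hi : i ≠ 0) (j : Fin ℓ) :
    mvAhFactor ℓ u c i j = expand i hi
      (rescale (MvPowerSeries.C c * MvPowerSeries.X j) (mk fun k => MvPowerSeries.C (u k))) := by
  ext m : 1
  rw [mvAhFactor, coeff_mk, if_neg hi, coeff_expand]
  split_ifs
  · rw [coeff_rescale, coeff_mk, mul_pow, ← map_pow, MvPowerSeries.X_pow_eq,
      ← MvPowerSeries.monomial_zero_eq_C_apply, ← MvPowerSeries.monomial_zero_eq_C_apply,
      MvPowerSeries.monomial_mul_monomial, MvPowerSeries.monomial_mul_monomial, zero_add,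
      add_zero, mul_one, mul_comm]
  · rfl

theorem eulerDeriv_mvAhFactor_zero (u : ℕ → R) (c : R) (j : Fin ℓ) :
    eulerDeriv (mvAhFactor ℓ u c 0 j) = 0 := by
  ext m : 1
  rw [coeff_eulerDeriv, mvAhFactor, coeff_mk]
  rcases m with _ | m
  · exact zero_smul ℕ _
  · simp

theorem eulerDeriv_mvAhFactor {p : ℕ} (hp : 1 < p) {u : ℕ → R} (hu : ArtinHasseRecurrence p u)
    (c : R) (i : ℕ) (j : Fin ℓ) :
    eulerDeriv (mvAhFactor ℓ u c i j) =
      ahLogDeriv p i (MvPowerSeries.C c * MvPowerSeries.X j) * mvAhFactor ℓ u c i j := by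
  rcases eq_or_ne i 0 with rfl | hi
  · rw [eulerDeriv_mvAhFactor_zero, ahLogDeriv_zero_left, zero_mul]
  · rw [mvAhFactor_eq_expand u c hi]
    exact eulerDeriv_expand_rescale_mk hp (hu.map MvPowerSeries.C) hi _

end mvAhFactor

section mvAhCoeff

variable {R : Type*} [CommRing R] {ℓ : ℕ} (d : ℕ) (u a : ℕ → R) (c : Fin ℓ → R)

noncomputable def mvAhProd : (MvPowerSeries (Fin ℓ) R)⟦X⟧ :=
  ∏ j : Fin ℓ, ∏ i ∈ Finset.range (d + 1), mvAhFactor ℓ u (c j * a i) i j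

theorem mvAhCoeff_natCast (n : ℕ) : mvAhCoeff ℓ d u a c n = coeff n (mvAhProd d u a c) := by
  rw [mvAhCoeff, if_neg (by omega), Int.toNat_natCast, mvAhProd]

theorem mvAhCoeff_natCast_sub (n m : ℕ) :
    mvAhCoeff ℓ d u a c ((n : ℤ) - m) =
      if m ≤ n then coeff (n - m) (mvAhProd d u a c) else 0 := by
  rw [mvAhCoeff, mvAhProd]
  split_ifs with hneg hle hle
  · exact absurd hneg (not_lt.mpr (sub_nonneg.mpr (Nat.cast_le.mpr hle)))
  · rfl
  · rw [show ((n : ℤ) - m).toNat = n - m by omega]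
  · omega

variable {p : ℕ}

theorem eulerDeriv_mvAhProd (hp : 1 < p) (hu : ArtinHasseRecurrence p u) :
    eulerDeriv (mvAhProd d u a c) =
      (∑ j : Fin ℓ, ∑ i ∈ Finset.range (d + 1),
        ahLogDeriv p i (MvPowerSeries.C (c j * a i) * MvPowerSeries.X j)) * mvAhProd d u a c := by
  rw [mvAhProd]
  refine Derivation.map_prod_eq_sum_mul_prod _ _ _ _ fun j _ => ?_
  exact Derivation.map_prod_eq_sum_mul_prod _ _ _ _ fun i _ => eulerDeriv_mvAhFactor hp hu _ i j

theorem mvAhCoeff_recurrence (hp : 1 < p) (hu : ArtinHasseRecurrence p u) (n : ℕ) :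
    n • mvAhCoeff ℓ d u a c n =
      ∑ i ∈ Finset.Icc 1 d, ∑ r ∈ Finset.range (n + 1),
        i • mvAhCoeff ℓ d u a c ((n : ℤ) - (i : ℤ) * (p : ℤ) ^ r)
          * MvPowerSeries.C (a i ^ p ^ r)
          * ∑ j : Fin ℓ, (MvPowerSeries.C (c j) * MvPowerSeries.X j) ^ p ^ r := by
  have hterm : ∀ i r (j : Fin ℓ),
      (if i * p ^ r ≤ n then
        (i : MvPowerSeries (Fin ℓ) R) * (MvPowerSeries.C (c j * a i) * MvPowerSeries.X j) ^ p ^ r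
          * coeff (n - i * p ^ r) (mvAhProd d u a c) else 0) =
      i • mvAhCoeff ℓ d u a c ((n : ℤ) - (i : ℤ) * (p : ℤ) ^ r)
        * MvPowerSeries.C (a i ^ p ^ r) * (MvPowerSeries.C (c j) * MvPowerSeries.X j) ^ p ^ r := by
    intro i r j
    rw [show (i : ℤ) * (p : ℤ) ^ r = ((i * p ^ r : ℕ) : ℤ) by push_cast; rfl,
      mvAhCoeff_natCast_sub]
    split_ifs
    · rw [map_mul, map_pow, nsmul_eq_mul]
      ring
    · rw [smul_zero, zero_mul, zero_mul]
  calc n • mvAhCoeff ℓ d u a c n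
      = ∑ j : Fin ℓ, ∑ i ∈ Finset.range (d + 1), ∑ r ∈ Finset.range (n + 1),
          if i * p ^ r ≤ n then
            (i : MvPowerSeries (Fin ℓ) R) *
              (MvPowerSeries.C (c j * a i) * MvPowerSeries.X j) ^ p ^ r
              * coeff (n - i * p ^ r) (mvAhProd d u a c) else 0 := by
        rw [mvAhCoeff_natCast, ← coeff_eulerDeriv, eulerDeriv_mvAhProd d u a c hp hu]
        simp only [Finset.sum_mul, map_sum, coeff_ahLogDeriv_mul hp]
    _ = ∑ i ∈ Finset.range (d + 1), ∑ r ∈ Finset.range (n + 1),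
          i • mvAhCoeff ℓ d u a c ((n : ℤ) - (i : ℤ) * (p : ℤ) ^ r)
            * MvPowerSeries.C (a i ^ p ^ r)
            * ∑ j : Fin ℓ, (MvPowerSeries.C (c j) * MvPowerSeries.X j) ^ p ^ r := by
        rw [Finset.sum_comm]
        refine Finset.sum_congr rfl fun i _ => ?_
        rw [Finset.sum_comm]
        simp only [hterm, Finset.mul_sum]
    _ = _ := by
        refine (Finset.sum_subset (fun i hi => ?_) fun i hi hi' => ?_).symm
        · simp only [Finset.mem_Icc, Finset.mem_range] at hi ⊢
          omega
        · obtain rfl : i = 0 := by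
            simp only [Finset.mem_Icc, Finset.mem_range] at hi hi'
            omega
          simp

end mvAhCoeff

theorem mvAhCoeff_recurrence_mod_p_general (p d ℓ : ℕ) [Fact p.Prime] {R : Type*} [CommRing R]
    (a : ℕ → R) (c : Fin ℓ → R) (u : ℕ → R)
    (hu : ∀ k : ℕ, 1 ≤ k →
      k • u k = ∑ r ∈ Finset.range (k + 1), if p ^ r ≤ k then u (k - p ^ r) else 0)
    (n : ℕ) :
    n • mvAhCoeff ℓ d u a c (n : ℤ)
      - ∑ i ∈ Finset.Icc 1 d, ∑ r ∈ Finset.range (n + 1),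
          i • mvAhCoeff ℓ d u a c ((n : ℤ) - (i : ℤ) * (p : ℤ) ^ r)
            * MvPowerSeries.C (σ := Fin ℓ) (R := R) (a i ^ p ^ r)
            * (∑ j : Fin ℓ,
                MvPowerSeries.C (σ := Fin ℓ) (R := R) (c j) * MvPowerSeries.X j) ^ p ^ r
      ∈ Ideal.span {(p : MvPowerSeries (Fin ℓ) R)} := by
  have hp : p.Prime := Fact.out
  rw [mvAhCoeff_recurrence d u a c hp.one_lt hu, ← Finset.sum_sub_distrib]
  refine Ideal.sum_mem _ fun i _ => ?_
  rw [← Finset.sum_sub_distrib]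
  refine Ideal.sum_mem _ fun r _ => ?_
  rw [← mul_sub]
  exact Ideal.mul_mem_left _ _ (Ideal.mem_span_singleton.mpr
    (Finset.prime_dvd_sum_pow_sub_pow_sum hp _ _ r))

/-- Lemma 5.2 of Ren–Wan–Xiao–Yu (the congruence): modulo `p`, the recurrence for the
coefficients `e_n` of `∏_j E_{c_j f}(x)_{π_j}` involves only powers of the single element
`T̄ = ∑_j c_j π_j`:
`n e_n ≡ ∑_{i=1}^d ∑_{r≥0} i · e_{n - i p^r} · a_i^{p^r} · (∑_j c_j π_j)^{p^r}  (mod p)`. -/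
theorem mvAhCoeff_recurrence_mod_p (p d ℓ : ℕ) [Fact p.Prime] (hd : 0 < d) (hpd : ¬ p ∣ d)
    (hℓ : 0 < ℓ) {R : Type*} [CommRing R] (a : ℕ → R) (had : IsUnit (a d)) (c : Fin ℓ → R)
    (u : ℕ → R) (hu0 : u 0 = 1)
    (hu : ∀ k : ℕ, 1 ≤ k →
      k • u k = ∑ r ∈ Finset.range (k + 1), if p ^ r ≤ k then u (k - p ^ r) else 0)
    (n : ℕ) (hn : 1 ≤ n) :
    n • mvAhCoeff ℓ d u a c (n : ℤ)
      - ∑ i ∈ Finset.Icc 1 d, ∑ r ∈ Finset.range (n + 1),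
          i • mvAhCoeff ℓ d u a c ((n : ℤ) - (i : ℤ) * (p : ℤ) ^ r)
            * MvPowerSeries.C (σ := Fin ℓ) (R := R) (a i ^ p ^ r)
            * (∑ j : Fin ℓ,
                MvPowerSeries.C (σ := Fin ℓ) (R := R) (c j) * MvPowerSeries.X j) ^ p ^ r
      ∈ Ideal.span {(p : MvPowerSeries (Fin ℓ) R)} :=
  mvAhCoeff_recurrence_mod_p_general p d ℓ a c u hu n
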